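/- Let f be an entire function satisfying: (M1) f(z) ≠ 0 whenever Im z ≤ 0; (M2) |f(z)| ≤ |f̄(z)| whenever Im z ≥ 0, where f̄(z) := conj(f(conj z)); (M3) for every m ∈ ℕ, z^m/f(z) → 0 as |z| → ∞ uniformly on {z : Im z ≤ 0}. Let δ ∈ (0,1) and let w be continuous on {Im z ≥ 0}, holomorphic on the open upper half-plane, with |w(z)| ≤ δ for all Im z ≥ 0. Then for every z with Im z > 0: ∫_ℝ conj(w(x))/(f(x)·(f(x) − conj(w(x))·conj(f(x)))·(x − z)) dx = 0. -/

import Mathlib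

/-!
Put `f̄ = conj ∘ f ∘ conj`. On the real line the integrand is the conjugate of
`w ζ / (f̄ ζ (f̄ ζ - w ζ f ζ) (ζ - conj z))`, which is holomorphic on the open upper
half-plane: (M1) makes `f̄` zero-free there, (M2) with `|w| ≤ δ < 1` gives
`|f̄ - w f| ≥ (1 - δ)|f̄|`, and `conj z` lies in the lower half-plane. By (M3) it is
`O(|ζ|⁻²)` on the closed upper half-plane, so Cauchy's theorem on the rectangles
`[-R, R] × [0, R]` shows that its integral over `ℝ` vanishes.
-/

open Complex MeasureTheory Filter Set Asymptotics ComplexConjugate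
open scoped Interval

variable {E : Type*} [NormedAddCommGroup E]

theorem integrable_of_norm_le_div_sq {F : ℝ → E} (hF : Continuous F) {C R : ℝ}
    (hb : ∀ x : ℝ, R ≤ |x| → ‖F x‖ ≤ C / x ^ 2) : Integrable F := by
  refine hF.locallyIntegrable.integrable_of_isBigO_cocompact
    (g := fun x : ℝ => (1 + x ^ 2)⁻¹) ?_ (integrable_inv_one_add_sq.integrableAtFilter _)
  refine IsBigO.of_bound (2 * |C|) ?_
  filter_upwards [tendsto_norm_cocompact_atTop.eventually_ge_atTop (max R 1)] with x hx
  rw [Real.norm_eq_abs, max_le_iff] at hx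
  have hx2 : 1 ≤ x ^ 2 := by nlinarith [sq_abs x]
  rw [norm_inv, Real.norm_of_nonneg (by positivity), ← div_eq_mul_inv]
  calc ‖F x‖ ≤ C / x ^ 2 := hb x hx.1
    _ ≤ |C| / x ^ 2 := by gcongr; exact le_abs_self C
    _ ≤ 2 * |C| / (1 + x ^ 2) := by
      rw [div_le_div_iff₀ (by positivity) (by positivity)]
      nlinarith [abs_nonneg C]

variable [NormedSpace ℂ E] {F : ℂ → E}

theorem norm_intervalIntegral_le_of_upperHalfPlane
    (hc : ContinuousOn F {ζ | 0 ≤ ζ.im}) (hd : DifferentiableOn ℂ F {ζ | 0 < ζ.im})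
    {R M : ℝ} (hR : 0 ≤ R) (hM : ∀ ζ : ℂ, 0 ≤ ζ.im → R ≤ ‖ζ‖ → ‖F ζ‖ ≤ M) :
    ‖∫ x in (-R)..R, F x‖ ≤ 4 * R * M := by
  have rect := integral_boundary_rect_eq_zero_of_continuousOn_of_differentiableOn F
    (-R : ℂ) (R + R * I)
    (hc.mono fun ζ hζ => by simp [mem_reProdIm, uIcc_of_le hR] at hζ; exact hζ.2.1)
    (hd.mono fun ζ hζ => by simp [mem_reProdIm, hR] at hζ; exact hζ.2.1)
  simp only [neg_re, ofReal_re, add_re, mul_re, I_re, I_im, ofReal_im, neg_im, add_im, mul_im,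
    mul_zero, mul_one, sub_zero, add_zero, zero_add, neg_zero, ofReal_zero, zero_mul] at rect
  have top : ‖∫ x in (-R)..R, F (x + R * I)‖ ≤ M * (2 * R) := by
    refine (intervalIntegral.norm_integral_le_of_norm_le_const fun x _ => hM _ ?_ ?_).trans_eq ?_
    · simp [hR]
    · simpa [abs_of_nonneg hR] using abs_im_le_norm ((x : ℂ) + R * I)
    · rw [sub_neg_eq_add, abs_of_nonneg (by linarith)]; ring
  have side : ∀ a : ℝ, |a| = R → ‖∫ y in (0 : ℝ)..R, F (a + y * I)‖ ≤ M * R := by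
    intro a ha
    refine (intervalIntegral.norm_integral_le_of_norm_le_const fun y hy => hM _ ?_ ?_).trans_eq ?_
    · rw [uIoc_of_le hR] at hy
      simpa using hy.1.le
    · simpa [ha] using abs_re_le_norm ((a : ℂ) + y * I)
    · rw [sub_zero, abs_of_nonneg hR]
  have left := side (-R) (by rw [abs_neg, abs_of_nonneg hR])
  have boundary : ∫ x in (-R)..R, F x = (∫ x in (-R)..R, F (x + R * I))
      - I • (∫ y in (0 : ℝ)..R, F (R + y * I)) + I • ∫ y in (0 : ℝ)..R, F ((-R : ℝ) + y * I) := by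
    rw [← sub_eq_zero, ← rect]; abel
  calc ‖∫ x in (-R)..R, F x‖
      ≤ ‖∫ x in (-R)..R, F (x + R * I)‖ + ‖∫ y in (0 : ℝ)..R, F (R + y * I)‖
        + ‖∫ y in (0 : ℝ)..R, F ((-R : ℝ) + y * I)‖ := by
        rw [boundary]
        refine (norm_add_le _ _).trans (add_le_add ((norm_sub_le _ _).trans_eq ?_) ?_)
        · rw [norm_smul, norm_I, one_mul]
        · rw [norm_smul, norm_I, one_mul]
    _ ≤ M * (2 * R) + M * R + M * R := by
        gcongr
        · exact side R (abs_of_nonneg hR)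
    _ = 4 * R * M := by ring

theorem integral_real_eq_zero_of_upperHalfPlane
    (hc : ContinuousOn F {ζ | 0 ≤ ζ.im}) (hd : DifferentiableOn ℂ F {ζ | 0 < ζ.im})
    {C R₀ : ℝ} (hC : 0 ≤ C) (hb : ∀ ζ : ℂ, 0 ≤ ζ.im → R₀ ≤ ‖ζ‖ → ‖F ζ‖ ≤ C / ‖ζ‖ ^ 2) :
    ∫ x : ℝ, F x = 0 := by
  have hint : Integrable fun x : ℝ => F x := by
    refine integrable_of_norm_le_div_sq (R := R₀) (C := C)
      (hc.comp_continuous continuous_ofReal fun x => by simp) fun x hx => ?_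
    simpa using hb x (by simp) (by simpa using hx)
  have hlim := intervalIntegral_tendsto_integral hint tendsto_neg_atTop_atBot tendsto_id
  refine tendsto_nhds_unique hlim (squeeze_zero_norm' (a := fun R => 4 * C / R) ?_
    (tendsto_const_nhds.div_atTop tendsto_id))
  filter_upwards [eventually_ge_atTop R₀, eventually_gt_atTop 0] with R hR₀R hR
  have hM : ∀ ζ : ℂ, 0 ≤ ζ.im → R ≤ ‖ζ‖ → ‖F ζ‖ ≤ C / R ^ 2 := fun ζ hζ hRζ =>
    (hb ζ hζ (hR₀R.trans hRζ)).trans (by gcongr)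
  calc ‖∫ x in (-R)..R, F x‖ ≤ 4 * R * (C / R ^ 2) :=
        norm_intervalIntegral_le_of_upperHalfPlane hc hd hR.le hM
    _ = 4 * C / R := by field_simp

theorem one_sub_mul_norm_le_norm_sub_mul {R : Type*} [SeminormedRing R] {a b c : R} {δ : ℝ}
    (hb : ‖b‖ ≤ ‖a‖) (hc : ‖c‖ ≤ δ) : (1 - δ) * ‖a‖ ≤ ‖a - c * b‖ := by
  have hcb : ‖c * b‖ ≤ δ * ‖a‖ := (norm_mul_le c b).trans <|
    (mul_le_mul_of_nonneg_left hb (norm_nonneg c)).trans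
      (mul_le_mul_of_nonneg_right hc (norm_nonneg a))
  linarith [norm_sub_norm_le a (c * b)]

/-- With `h = f̄` and `c = conj z`, its conjugate on `ℝ` is the integrand of `J₃`. -/
noncomputable def reflectedJ3Integrand (f h w : ℂ → ℂ) (c ζ : ℂ) : ℂ :=
  w ζ / (h ζ * (h ζ - w ζ * f ζ) * (ζ - c))

section reflectedJ3Integrand

variable {f h w : ℂ → ℂ} {δ : ℝ} {c ζ : ℂ}

theorem reflectedJ3Integrand_denom_ne_zero (hh0 : h ζ ≠ 0) (hfh : ‖f ζ‖ ≤ ‖h ζ‖) (hw : ‖w ζ‖ ≤ δ)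
    (hδ : δ < 1) (hζ : ζ ≠ c) : h ζ * (h ζ - w ζ * f ζ) * (ζ - c) ≠ 0 := by
  refine mul_ne_zero (mul_ne_zero hh0 fun h0 => hh0 ?_) (sub_ne_zero.mpr hζ)
  have := one_sub_mul_norm_le_norm_sub_mul hfh hw
  rw [h0, norm_zero] at this
  exact norm_le_zero_iff.mp (nonpos_of_mul_nonpos_right this (by linarith))

theorem norm_reflectedJ3Integrand_le (hfh : ‖f ζ‖ ≤ ‖h ζ‖) (hw : ‖w ζ‖ ≤ δ) (hδ : δ < 1)
    (hζh : ‖ζ‖ ≤ ‖h ζ‖) (hζc : ‖c‖ + 1 ≤ ‖ζ‖) :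
    ‖reflectedJ3Integrand f h w c ζ‖ ≤ δ / (1 - δ) / ‖ζ‖ ^ 2 := by
  have hζ : 0 < ‖ζ‖ := by linarith [norm_nonneg c]
  have hsub : (1 - δ) * ‖ζ‖ ≤ ‖h ζ - w ζ * f ζ‖ :=
    (mul_le_mul_of_nonneg_left hζh (by linarith)).trans (one_sub_mul_norm_le_norm_sub_mul hfh hw)
  have hdist : 1 ≤ ‖ζ - c‖ := by linarith [norm_sub_norm_le ζ c]
  have hden : (1 - δ) * ‖ζ‖ ^ 2 ≤ ‖h ζ‖ * ‖h ζ - w ζ * f ζ‖ * ‖ζ - c‖ :=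
    calc (1 - δ) * ‖ζ‖ ^ 2 = ‖ζ‖ * ((1 - δ) * ‖ζ‖) * 1 := by ring
      _ ≤ ‖h ζ‖ * ‖h ζ - w ζ * f ζ‖ * ‖ζ - c‖ := by gcongr
  rw [reflectedJ3Integrand, norm_div, norm_mul, norm_mul, div_div]
  have hδ' : 0 < 1 - δ := sub_pos.mpr hδ
  exact div_le_div₀ ((norm_nonneg _).trans hw) hw (by positivity) hden

theorem integral_reflectedJ3Integrand_eq_zero (hf : Differentiable ℂ f) (hh : Differentiable ℂ h)
    (hh0 : ∀ ζ : ℂ, 0 ≤ ζ.im → h ζ ≠ 0) (hfh : ∀ ζ : ℂ, 0 ≤ ζ.im → ‖f ζ‖ ≤ ‖h ζ‖)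
    {R : ℝ} (hζh : ∀ ζ : ℂ, 0 ≤ ζ.im → R ≤ ‖ζ‖ → ‖ζ‖ ≤ ‖h ζ‖)
    (hwc : ContinuousOn w {ζ | 0 ≤ ζ.im}) (hwh : DifferentiableOn ℂ w {ζ | 0 < ζ.im})
    (hw : ∀ ζ : ℂ, 0 ≤ ζ.im → ‖w ζ‖ ≤ δ) (hδ₀ : 0 ≤ δ) (hδ₁ : δ < 1) (hc : c.im < 0) :
    ∫ x : ℝ, reflectedJ3Integrand f h w c x = 0 := by
  have hden : ∀ ζ : ℂ, 0 ≤ ζ.im → h ζ * (h ζ - w ζ * f ζ) * (ζ - c) ≠ 0 := fun ζ hζ =>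
    reflectedJ3Integrand_denom_ne_zero (hh0 ζ hζ) (hfh ζ hζ) (hw ζ hζ) hδ₁
      fun e => by rw [e] at hζ; linarith
  have hfc := hf.continuous
  have hhc := hh.continuous
  refine integral_real_eq_zero_of_upperHalfPlane (hwc.div (by fun_prop) hden)
    (hwh.div (by fun_prop) fun ζ hζ => hden ζ (le_of_lt hζ))
    (div_nonneg hδ₀ (sub_nonneg.mpr hδ₁.le)) (R₀ := max R (‖c‖ + 1)) fun ζ hζ hRζ => ?_
  rw [max_le_iff] at hRζ
  exact norm_reflectedJ3Integrand_le (hfh ζ hζ) (hw ζ hζ) hδ₁ (hζh ζ hζ hRζ.1) hRζ.2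

end reflectedJ3Integrand

/-- Vanishing of the integral `J₃` in the proof of Theorem 2(iii): under (M1)–(M3) on the
entire function `f` and `|w| ≤ δ < 1` on the closed upper half-plane (`w` continuous
there and holomorphic on the open half-plane), for every `z` with `Im z > 0`,
`∫_ℝ conj(w(x))/(f(x)·(f(x) - conj(w(x))·conj(f(x)))·(x - z)) dx = 0`. -/
theorem J3_eq_zero
    (f : ℂ → ℂ) (hf : Differentiable ℂ f)
    (hM1 : ∀ z : ℂ, z.im ≤ 0 → f z ≠ 0)
    (hM2 : ∀ z : ℂ, 0 ≤ z.im →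
      ‖f z‖ ≤ ‖(starRingEnd ℂ) (f ((starRingEnd ℂ) z))‖)
    (hM3 : ∀ m : ℕ, ∀ ε : ℝ, 0 < ε → ∃ R : ℝ, 0 < R ∧ ∀ z : ℂ, z.im ≤ 0 →
      R ≤ ‖z‖ → ‖z‖ ^ m ≤ ε * ‖f z‖)
    (δ : ℝ) (hδ : δ ∈ Set.Ioo (0 : ℝ) 1)
    (w : ℂ → ℂ)
    (hwc : ContinuousOn w {z : ℂ | 0 ≤ z.im})
    (hwh : DifferentiableOn ℂ w {z : ℂ | 0 < z.im})
    (hwb : ∀ z : ℂ, 0 ≤ z.im → ‖w z‖ ≤ δ) :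
    ∀ z : ℂ, 0 < z.im →
      ∫ x : ℝ, (starRingEnd ℂ) (w (x : ℂ)) /
        (f (x : ℂ) *
          (f (x : ℂ) - (starRingEnd ℂ) (w (x : ℂ)) * (starRingEnd ℂ) (f (x : ℂ))) *
          ((x : ℂ) - z)) = 0 := by
  intro z hz
  obtain ⟨R, -, hR⟩ := hM3 1 1 one_pos
  have hvanish : ∫ x : ℝ, reflectedJ3Integrand f (conj ∘ f ∘ conj) w (conj z) x = 0 :=
    integral_reflectedJ3Integrand_eq_zero hf (fun ζ => differentiableAt_conj_conj_iff.mpr (hf _))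
      (fun ζ hζ => by simpa using hM1 (conj ζ) (by simpa using hζ)) hM2
      (fun ζ hζ hRζ => by simpa using hR (conj ζ) (by simpa using hζ) (by simpa using hRζ))
      hwc hwh hwb hδ.1.le hδ.2 (by simpa using hz)
  calc _ = ∫ x : ℝ, conj (reflectedJ3Integrand f (conj ∘ f ∘ conj) w (conj z) x) := by
        simp [reflectedJ3Integrand]
    _ = 0 := by rw [integral_conj, hvanish, map_zero]
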